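/- arXiv:1902.07621 — 5 statements merged into one kernel-verified Lean document; each statement's English description precedes it below -/
import Mathlib

section
/- Let n ≥ 1 and let Y ⊆ ℝⁿ be a nonempty open convex set. Let F, G : ℝⁿ → ℝ be nonnegative Borel functions with ∫_{ℝⁿ} F dx = ∫_Y G dy = 1 such that F and 1/F are essentially bounded on every compact subset of ℝⁿ and G and 1/G are essentially bounded on every compact subset of Y. Let u : ℝⁿ → ℝ be a convex function whose a.e.-defined gradient ∇u pushes F dx forward to 1_Y G dy. Then u is an Alexandrov solution of the associated Monge–Ampère equation: for every Borel set A ⊆ ℝⁿ, the Lebesgue measure of the subdifferential image ∂u(A) equals ∫_A F(x)/G(∇u(x)) dx. -/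
/-!
Since `F > 0` a.e. and `G > 0` a.e. on `Y`, the measure `μ = F dx` is equivalent to `dx`, and
`ν = 1_Y G dy` is equivalent to `dx` restricted to `Y`. Hence `T x ∈ ∂u(x) ∩ Y` for a.e. `x`,
which forces `∂u(x) ⊆ closure Y` for every `x` (separation plus continuity of `u`), and puts
almost every point of `Y` in the convex domain of the Legendre transform `u*`, hence all of `Y`.
Being convex on the open set `Y`, `u*` is differentiable a.e. on `Y`, and at such a point `p`
the relation `p ∈ ∂u(x)` forces `x = ∇u*(p)`. So, up to a null set, `∂u(A)` is a measurable set
`B ⊆ Y` with `T⁻¹(B) = A` `μ`-a.e., and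
`|B| = ∫_B G⁻¹ dν = ∫_{T⁻¹ B} G(T)⁻¹ dμ = ∫_A F / G(T) dx`.
-/

open MeasureTheory Set
open scoped InnerProductSpace ENNReal

/-- The subdifferential of `u` at `x`:
`∂u(x) = {p : ∀ z, u(z) ≥ u(x) + ⟨p, z − x⟩}`. -/
def subdifferential {n : ℕ} (u : EuclideanSpace ℝ (Fin n) → ℝ)
    (x : EuclideanSpace ℝ (Fin n)) : Set (EuclideanSpace ℝ (Fin n)) :=
  {p | ∀ z, u x + ⟪p, z - x⟫_ℝ ≤ u z}

open Filter Topology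

section Measure

variable {X : Type*} [TopologicalSpace X] [SecondCountableTopology X] [MeasurableSpace X]
  [OpensMeasurableSpace X] {μ : Measure X} {U : Set X} {P : X → Prop}

theorem ae_restrict_of_forall_mem_nhds (hU : IsOpen U)
    (h : ∀ x ∈ U, ∃ s ∈ 𝓝 x, ∀ᵐ y ∂μ.restrict s, P y) : ∀ᵐ y ∂μ.restrict U, P y := by
  rw [ae_iff, Measure.restrict_apply' hU.measurableSet]
  refine measure_null_of_locally_null _ fun x hx => ?_
  obtain ⟨s, hs, hP⟩ := h x hx.2
  refine ⟨({y | ¬P y} ∩ U) ∩ s, inter_mem_nhdsWithin _ hs, ?_⟩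
  exact measure_mono_null (inter_subset_inter_left _ inter_subset_left)
    (nonpos_iff_eq_zero.1 ((Measure.le_restrict_apply s _).trans (ae_iff.1 hP).le))

theorem ae_restrict_of_forall_isCompact [LocallyCompactSpace X] (hU : IsOpen U)
    (h : ∀ K ⊆ U, IsCompact K → ∀ᵐ y ∂μ.restrict K, P y) : ∀ᵐ y ∂μ.restrict U, P y := by
  refine ae_restrict_of_forall_mem_nhds hU fun x hx => ?_
  obtain ⟨K, hK, hxK, hKU⟩ := exists_compact_subset hU hx
  exact ⟨K, mem_interior_iff_mem_nhds.1 hxK, h K hKU hK⟩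

end Measure

theorem ae_map_mem_of_ae_mem {α β : Type*} [MeasurableSpace α] [MeasurableSpace β]
    {μ : Measure α} {f : α → β} (hf : AEMeasurable f μ) {s : Set β}
    (hs : NullMeasurableSet s (μ.map f)) (h : ∀ᵐ x ∂μ, f x ∈ s) : ∀ᵐ y ∂μ.map f, y ∈ s := by
  rw [ae_iff, ← compl_def, Measure.map_apply₀ hf hs.compl]
  exact ae_iff.1 h

theorem measure_eq_setLIntegral_inv_of_map_eq_withDensity {α β : Type*} [MeasurableSpace α]
    [MeasurableSpace β] {μ : Measure α} {ρ : Measure β} {T : α → β} (hT : Measurable T)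
    {g : β → ℝ≥0∞} (hg : Measurable g) (hg0 : ∀ᵐ y ∂ρ, g y ≠ 0) (hgtop : ∀ᵐ y ∂ρ, g y ≠ ∞)
    (hpush : μ.map T = ρ.withDensity g) {A : Set α} {B : Set β} (hB : MeasurableSet B)
    (hAB : T ⁻¹' B =ᵐ[μ] A) : ρ B = ∫⁻ x in A, (g (T x))⁻¹ ∂μ :=
  calc ρ B = (ρ.withDensity g).withDensity (fun y => (g y)⁻¹) B := by
        rw [withDensity_inv_same hg hg0 hgtop]
    _ = ∫⁻ x in T ⁻¹' B, (g (T x))⁻¹ ∂μ := by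
        rw [withDensity_apply _ hB, ← hpush, setLIntegral_map (f := fun y => (g y)⁻¹) hB hg.inv hT]
    _ = ∫⁻ x in A, (g (T x))⁻¹ ∂μ := setLIntegral_congr hAB

theorem setLIntegral_inv_withDensity_ofReal {α : Type*} [MeasurableSpace α] {μ : Measure α}
    {f g : α → ℝ} (hf : Measurable f) (hg : Measurable g) (hg0 : ∀ᵐ x ∂μ, 0 < g x)
    {A : Set α} (hA : MeasurableSet A) :
    ∫⁻ x in A, (ENNReal.ofReal (g x))⁻¹ ∂μ.withDensity (fun x => ENNReal.ofReal (f x)) =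
      ∫⁻ x in A, ENNReal.ofReal (f x / g x) ∂μ := by
  rw [restrict_withDensity hA, lintegral_withDensity_eq_lintegral_mul _ hf.ennreal_ofReal
    (g := fun x => (ENNReal.ofReal (g x))⁻¹) hg.ennreal_ofReal.inv]
  refine lintegral_congr_ae ((ae_restrict_of_ae hg0).mono fun x hx => ?_)
  simp only [Pi.mul_apply]
  rw [ENNReal.ofReal_div_of_pos hx, div_eq_mul_inv]

section FiniteDimensional

variable {E : Type*} [NormedAddCommGroup E] [NormedSpace ℝ E] [FiniteDimensional ℝ E]
  [MeasurableSpace E] [BorelSpace E] {μ : Measure E} [μ.IsAddHaarMeasure] {U : Set E}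

theorem ConvexOn.ae_differentiableAt {f : E → ℝ} (hU : IsOpen U) (hf : ConvexOn ℝ U f) :
    ∀ᵐ x ∂μ.restrict U, DifferentiableAt ℝ f x := by
  refine ae_restrict_of_forall_mem_nhds hU fun x hx => ?_
  obtain ⟨C, t, ht, hlip⟩ := hf.locallyLipschitzOn hU hx
  rw [hU.nhdsWithin_eq hx] at ht
  refine ⟨interior t, interior_mem_nhds.2 ht, ?_⟩
  rw [ae_restrict_iff' isOpen_interior.measurableSet]
  filter_upwards [(hlip.mono interior_subset).ae_differentiableWithinAt_of_mem (μ := μ)]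
    with y hy hyt
  exact (hy hyt).differentiableAt (isOpen_interior.mem_nhds hyt)

theorem Convex.subset_of_ae_mem {C : Set E} (hC : Convex ℝ C) (hU : IsOpen U)
    (h : ∀ᵐ x ∂μ.restrict U, x ∈ C) : U ⊆ C := by
  intro p hp
  obtain ⟨r, hr, hball⟩ := Metric.isOpen_iff.1 hU p hp
  rw [ae_restrict_iff' hU.measurableSet] at h
  -- `p` is the midpoint of `x` and of its reflection `p + p - x`, and for a.e. `x` near `p`
  -- both lie in `C`.
  have hrefl : ∀ᵐ x ∂μ.restrict (Metric.ball p r), x ∈ C ∧ p + p - x ∈ C := by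
    have h' := (Measure.measurePreserving_sub_left μ (p + p)).quasiMeasurePreserving.ae h
    rw [ae_restrict_iff' Metric.isOpen_ball.measurableSet]
    filter_upwards [h, h'] with x hx hx' hxb
    refine ⟨hx (hball hxb), hx' (hball ?_)⟩
    rwa [Metric.mem_ball, dist_eq_norm, show p + p - x - p = -(x - p) by abel, norm_neg,
      ← dist_eq_norm]
  have := ae_restrict_neBot.2 (Metric.measure_ball_pos μ p hr).ne'
  obtain ⟨x, hxC, hx'C⟩ := hrefl.exists
  convert hC hxC hx'C (by norm_num : (0 : ℝ) ≤ 1 / 2) (by norm_num : (0 : ℝ) ≤ 1 / 2)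
    (by norm_num) using 1
  rw [smul_sub, add_sub_cancel, smul_add, ← add_smul]
  norm_num

end FiniteDimensional

section Legendre

variable {E : Type*} [NormedAddCommGroup E] [InnerProductSpace ℝ E]

theorem gradient_eq_of_eventually_le [CompleteSpace E] {f : E → ℝ} {x p : E}
    (hf : DifferentiableAt ℝ f x) (hle : ∀ᶠ z in 𝓝 x, f x + ⟪p, z - x⟫_ℝ ≤ f z) :
    gradient f x = p := by
  have hmin : IsLocalMin (fun z => f z - ⟪p, z⟫_ℝ) x := by
    filter_upwards [hle] with z hz
    rw [inner_sub_right] at hz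
    linarith
  have hfderiv : fderiv ℝ f x = innerSL ℝ p :=
    sub_eq_zero.1 (hmin.hasFDerivAt_eq_zero (hf.hasFDerivAt.sub (innerSL ℝ p).hasFDerivAt))
  rw [gradient, hfderiv]
  exact (InnerProductSpace.toDual ℝ E).symm_apply_apply p

theorem measurable_gradient [CompleteSpace E] [MeasurableSpace E] [BorelSpace E]
    (f : E → ℝ) : Measurable (gradient f) :=
  (InnerProductSpace.toDual ℝ E).symm.continuous.measurable.comp (measurable_fderiv ℝ f)

def legendreDomain (u : E → ℝ) : Set E := {p | BddAbove (range fun z => ⟪p, z⟫_ℝ - u z)}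

/-- Outside `legendreDomain u` the supremum is infinite and `⨆` returns the junk value `0`. -/
noncomputable def legendreTransform (u : E → ℝ) (p : E) : ℝ := ⨆ z, ⟪p, z⟫_ℝ - u z

variable {u : E → ℝ} {p : E}

theorem le_legendreTransform (hp : p ∈ legendreDomain u) (z : E) :
    ⟪p, z⟫_ℝ - u z ≤ legendreTransform u p :=
  le_ciSup hp z

theorem legendreTransform_le {c : ℝ} (h : ∀ z, ⟪p, z⟫_ℝ - u z ≤ c) : legendreTransform u p ≤ c :=
  ciSup_le h

theorem mem_legendreDomain_of_le {c : ℝ} (h : ∀ z, ⟪p, z⟫_ℝ - u z ≤ c) : p ∈ legendreDomain u :=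
  ⟨c, forall_mem_range.2 h⟩

theorem convex_legendreDomain (u : E → ℝ) : Convex ℝ (legendreDomain u) := by
  rintro p ⟨c, hc⟩ q ⟨d, hd⟩ a b ha hb hab
  refine mem_legendreDomain_of_le (c := a * c + b * d) fun z => ?_
  have hp := hc (mem_range_self z)
  have hq := hd (mem_range_self z)
  have hu : u z = a * u z + b * u z := by rw [← add_mul, hab, one_mul]
  rw [inner_add_left, real_inner_smul_left, real_inner_smul_left]
  linarith [mul_le_mul_of_nonneg_left hp ha, mul_le_mul_of_nonneg_left hq hb]

theorem convexOn_legendreTransform (u : E → ℝ) :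
    ConvexOn ℝ (legendreDomain u) (legendreTransform u) := by
  refine ⟨convex_legendreDomain u, fun p hp q hq a b ha hb hab =>
    legendreTransform_le fun z => ?_⟩
  have h1 := le_legendreTransform hp z
  have h2 := le_legendreTransform hq z
  have hu : u z = a * u z + b * u z := by rw [← add_mul, hab, one_mul]
  rw [inner_add_left, real_inner_smul_left, real_inner_smul_left, smul_eq_mul, smul_eq_mul]
  linarith [mul_le_mul_of_nonneg_left h1 ha, mul_le_mul_of_nonneg_left h2 hb]

end Legendre

section Subdifferential

variable {n : ℕ} {u : EuclideanSpace ℝ (Fin n) → ℝ} {p x : EuclideanSpace ℝ (Fin n)}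
  {Y A : Set (EuclideanSpace ℝ (Fin n))} {μ : Measure (EuclideanSpace ℝ (Fin n))}
  {T : EuclideanSpace ℝ (Fin n) → EuclideanSpace ℝ (Fin n)}

theorem ConvexOn.mem_subdifferential_of_hasGradientAt (hu : ConvexOn ℝ univ u)
    (h : HasGradientAt u p x) : p ∈ subdifferential u x := by
  intro z
  have hline : HasDerivAt (u ∘ AffineMap.lineMap x z) ⟪p, z - x⟫_ℝ (0 : ℝ) := by
    simpa [InnerProductSpace.toDual_apply_apply] using h.hasFDerivAt.comp_hasDerivAt_of_eq 0
      AffineMap.hasDerivAt_lineMap (AffineMap.lineMap_apply_zero x z).symm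
  have hslope := (hu.comp_affineMap (AffineMap.lineMap x z)).le_slope_of_hasDerivAt
    (mem_univ 0) (mem_univ 1) one_pos hline
  simp only [slope_def_field, Function.comp_apply, AffineMap.lineMap_apply_one,
    AffineMap.lineMap_apply_zero, sub_zero, div_one] at hslope
  linarith

theorem inner_sub_le_of_mem_subdifferential (h : p ∈ subdifferential u x)
    (z : EuclideanSpace ℝ (Fin n)) : ⟪p, z⟫_ℝ - u z ≤ ⟪p, x⟫_ℝ - u x := by
  have hz := h z
  rw [inner_sub_right] at hz
  linarith

theorem mem_legendreDomain_of_mem_subdifferential (h : p ∈ subdifferential u x) :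
    p ∈ legendreDomain u :=
  mem_legendreDomain_of_le (inner_sub_le_of_mem_subdifferential h)

theorem legendreTransform_eq_of_mem_subdifferential (h : p ∈ subdifferential u x) :
    legendreTransform u p = ⟪p, x⟫_ℝ - u x :=
  le_antisymm (legendreTransform_le (inner_sub_le_of_mem_subdifferential h))
    (le_legendreTransform (mem_legendreDomain_of_mem_subdifferential h) x)

theorem gradient_legendreTransform_eq (hp : legendreDomain u ∈ 𝓝 p)
    (hd : DifferentiableAt ℝ (legendreTransform u) p) (hx : p ∈ subdifferential u x) :
    gradient (legendreTransform u) p = x := by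
  refine gradient_eq_of_eventually_le hd ?_
  filter_upwards [hp] with q hq
  have := le_legendreTransform hq x
  rw [legendreTransform_eq_of_mem_subdifferential hx, inner_sub_right, real_inner_comm q x,
    real_inner_comm p x]
  linarith

theorem isClosed_setOf_mem_subdifferential (hu : Continuous u) :
    IsClosed {xp : EuclideanSpace ℝ (Fin n) × EuclideanSpace ℝ (Fin n) |
      xp.2 ∈ subdifferential u xp.1} := by
  have hinter : {xp : EuclideanSpace ℝ (Fin n) × EuclideanSpace ℝ (Fin n) |
      xp.2 ∈ subdifferential u xp.1} = ⋂ z, {xp | u xp.1 + ⟪xp.2, z - xp.1⟫_ℝ ≤ u z} := by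
    ext; simp [subdifferential]
  rw [hinter]
  exact isClosed_iInter fun z => isClosed_le (by fun_prop) continuous_const

theorem subdifferential_subset_closure (hu : Continuous u) {K : Set (EuclideanSpace ℝ (Fin n))}
    (hK : Convex ℝ K) (h : ∀ᵐ z ∂volume, ∃ q ∈ subdifferential u z, q ∈ K)
    (x : EuclideanSpace ℝ (Fin n)) :
    subdifferential u x ⊆ closure K := by
  intro p hp
  by_contra hpK
  obtain ⟨f, c, hfK, hcp⟩ := geometric_hahn_banach_closed_point hK.closure isClosed_closure hpK
  set v := (InnerProductSpace.toDual ℝ _).symm f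
  have hfv : ∀ w, ⟪v, w⟫_ℝ = f w := fun w => InnerProductSpace.toDual_symm_apply
  -- Test at `z` the subgradient inequality at `z + v` for a subgradient lying in `K`.
  have hae : ∀ᵐ z ∂volume, u (z + v) ≤ u z + c := by
    filter_upwards [(measurePreserving_add_right volume v).quasiMeasurePreserving.ae h]
      with z ⟨q, hq, hqK⟩
    have hsub := hq z
    rw [show z - (z + v) = -v by abel, inner_neg_right, real_inner_comm, hfv] at hsub
    linarith [hfK q (subset_closure hqK)]
  have hle : u (x + v) ≤ u x + c :=
    closure_minimal (fun z hz => hz) (isClosed_le (by fun_prop) (by fun_prop))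
      ((Measure.dense_of_ae hae).closure_eq ▸ mem_univ x)
  have hpx := hp (x + v)
  rw [add_sub_cancel_left, real_inner_comm, hfv] at hpx
  linarith

theorem measurableSet_inter_biUnion_subdifferential (hu : Continuous u)
    {D : Set (EuclideanSpace ℝ (Fin n))} (hD : MeasurableSet D) (hA : MeasurableSet A)
    {S : EuclideanSpace ℝ (Fin n) → EuclideanSpace ℝ (Fin n)} (hS : Measurable S)
    (hinj : ∀ p ∈ D, ∀ x, p ∈ subdifferential u x → S p = x) :
    MeasurableSet (D ∩ ⋃ x ∈ A, subdifferential u x) := by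
  have heq : D ∩ ⋃ x ∈ A, subdifferential u x = D ∩
      ((fun p => (S p, p)) ⁻¹' {xp | xp.2 ∈ subdifferential u xp.1} ∩ S ⁻¹' A) := by
    ext p
    simp only [mem_inter_iff, mem_iUnion₂, exists_prop, mem_preimage, mem_ofPred_eq]
    constructor
    · rintro ⟨hpD, x, hxA, hpx⟩
      obtain rfl := hinj p hpD x hpx
      exact ⟨hpD, hpx, hxA⟩
    · rintro ⟨hpD, hpS, hSA⟩
      exact ⟨hpD, S p, hSA, hpS⟩
  rw [heq]
  exact hD.inter (((isClosed_setOf_mem_subdifferential hu).measurableSet.preimage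
    (hS.prodMk measurable_id)).inter (hS hA))

theorem subset_legendreDomain_of_map (hYopen : IsOpen Y) (hT : AEMeasurable T μ)
    (hsub : ∀ᵐ x ∂μ, T x ∈ subdifferential u x) (hmap_ac : μ.map T ≪ volume.restrict Y)
    (hac_map : volume.restrict Y ≪ μ.map T) : Y ⊆ legendreDomain u := by
  refine (convex_legendreDomain u).subset_of_ae_mem hYopen (hac_map.ae_le ?_)
  refine ae_map_mem_of_ae_mem hT
    (((convex_legendreDomain u).nullMeasurableSet volume).mono_ac
      (hmap_ac.trans (Measure.absolutelyContinuous_of_le Measure.restrict_le_self))) ?_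
  filter_upwards [hsub] with x hx using mem_legendreDomain_of_mem_subdifferential hx

theorem exists_measurableSet_ae_eq_biUnion_subdifferential (hu : Continuous u)
    (hYopen : IsOpen Y) (hYconv : Convex ℝ Y) (hvol : volume ≪ μ) (hT : Measurable T)
    (hsub : ∀ᵐ x ∂μ, T x ∈ subdifferential u x) (hmap_ac : μ.map T ≪ volume.restrict Y)
    (hac_map : volume.restrict Y ≪ μ.map T) (hA : MeasurableSet A) :
    ∃ B, MeasurableSet B ∧ B ⊆ Y ∧ B =ᵐ[volume] (⋃ x ∈ A, subdifferential u x) ∧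
      T ⁻¹' B =ᵐ[μ] A := by
  have hTY : ∀ᵐ x ∂μ, T x ∈ Y :=
    ae_of_ae_map hT.aemeasurable (hmap_ac.ae_le (ae_restrict_mem hYopen.measurableSet))
  have hcl : ∀ x, subdifferential u x ⊆ closure Y := subdifferential_subset_closure hu hYconv
    (hvol.ae_le (by filter_upwards [hsub, hTY] with x h1 h2 using ⟨T x, h1, h2⟩))
  have hdom := subset_legendreDomain_of_map hYopen hT.aemeasurable hsub hmap_ac hac_map
  set D := Y ∩ {p | DifferentiableAt ℝ (legendreTransform u) p}
  have hD : ∀ᵐ p ∂volume.restrict Y, p ∈ D := by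
    filter_upwards [((convexOn_legendreTransform u).subset hdom hYconv).ae_differentiableAt hYopen,
      ae_restrict_mem hYopen.measurableSet] with p h1 h2 using ⟨h2, h1⟩
  have hinj : ∀ p ∈ D, ∀ x, p ∈ subdifferential u x → gradient (legendreTransform u) p = x :=
    fun p hp x hx =>
      gradient_legendreTransform_eq (mem_of_superset (hYopen.mem_nhds hp.1) hdom) hp.2 hx
  refine ⟨D ∩ ⋃ x ∈ A, subdifferential u x, measurableSet_inter_biUnion_subdifferential hu
    (hYopen.measurableSet.inter (measurableSet_of_differentiableAt ℝ _)) hA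
    (measurable_gradient _) hinj, fun p hp => hp.1.1, ?_, ?_⟩
  -- `∂u(A) \ B` lies in `frontier Y ∪ (Y \ D)`.
  · have hfr := measure_eq_zero_iff_ae_notMem.1 (hYconv.addHaar_frontier volume)
    filter_upwards [hfr, (ae_restrict_iff' hYopen.measurableSet).1 hD] with p hpfr hpD
    refine propext ⟨fun hp => hp.2, fun hp => ⟨hpD ?_, hp⟩⟩
    obtain ⟨x, -, hpx⟩ := mem_iUnion₂.1 hp
    by_contra hpY
    exact hpfr ⟨hcl x hpx, by rwa [hYopen.interior_eq]⟩
  · filter_upwards [hsub, ae_of_ae_map hT.aemeasurable (hmap_ac.ae_le hD)] with x hx hxD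
    refine propext ⟨fun ⟨_, hxA⟩ => ?_, fun hxA => ⟨hxD, mem_biUnion hxA hx⟩⟩
    obtain ⟨y, hyA, hy⟩ := mem_iUnion₂.1 hxA
    rwa [← hinj _ hxD x hx, hinj _ hxD y hy]

end Subdifferential

theorem brenier_mccann_is_alexandrov_solution_general
    (n : ℕ)
    (Y : Set (EuclideanSpace ℝ (Fin n)))
    (hYopen : IsOpen Y) (hYconv : Convex ℝ Y)
    (F G : EuclideanSpace ℝ (Fin n) → ℝ)
    (hFmeas : Measurable F) (hGmeas : Measurable G)
    (hFbd : ∀ K : Set (EuclideanSpace ℝ (Fin n)), IsCompact K →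
      ∃ lam Lam : ℝ, 0 < lam ∧ lam ≤ Lam ∧
        ∀ᵐ x ∂(volume.restrict K), lam ≤ F x ∧ F x ≤ Lam)
    (hGbd : ∀ K : Set (EuclideanSpace ℝ (Fin n)), K ⊆ Y → IsCompact K →
      ∃ lam Lam : ℝ, 0 < lam ∧ lam ≤ Lam ∧
        ∀ᵐ y ∂(volume.restrict K), lam ≤ G y ∧ G y ≤ Lam)
    (u : EuclideanSpace ℝ (Fin n) → ℝ)
    (hu : ConvexOn ℝ Set.univ u)
    (T : EuclideanSpace ℝ (Fin n) → EuclideanSpace ℝ (Fin n))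
    (hTmeas : Measurable T)
    (hTgrad : ∀ᵐ x ∂(volume : Measure (EuclideanSpace ℝ (Fin n))), HasGradientAt u (T x) x)
    (hpush : Measure.map T (volume.withDensity (fun x => ENNReal.ofReal (F x)))
      = (volume.restrict Y).withDensity (fun y => ENNReal.ofReal (G y))) :
    ∀ A : Set (EuclideanSpace ℝ (Fin n)), MeasurableSet A →
      volume (⋃ x ∈ A, subdifferential u x)
        = ∫⁻ x in A, ENNReal.ofReal (F x / G (T x)) := by
  intro A hA
  have hFpos : ∀ᵐ x ∂volume, 0 < F x := by
    simpa using ae_restrict_of_forall_isCompact isOpen_univ fun K _ hK =>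
      let ⟨_, _, hlam, _, hF⟩ := hFbd K hK
      hF.mono fun x hx => hlam.trans_le hx.1
  have hGpos : ∀ᵐ y ∂volume.restrict Y, 0 < G y :=
    ae_restrict_of_forall_isCompact hYopen fun K hKY hK =>
      let ⟨_, _, hlam, _, hG⟩ := hGbd K hKY hK
      hG.mono fun y hy => hlam.trans_le hy.1
  set μ := volume.withDensity fun x => ENNReal.ofReal (F x)
  have hvol : volume ≪ μ := withDensity_absolutelyContinuous' hFmeas.ennreal_ofReal.aemeasurable
    (hFpos.mono fun x hx => (ENNReal.ofReal_pos.2 hx).ne')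
  have hmap_ac : μ.map T ≪ volume.restrict Y := hpush ▸ withDensity_absolutelyContinuous _ _
  have hac_map : volume.restrict Y ≪ μ.map T := hpush ▸ withDensity_absolutelyContinuous'
    hGmeas.ennreal_ofReal.aemeasurable (hGpos.mono fun y hy => (ENNReal.ofReal_pos.2 hy).ne')
  have hsub : ∀ᵐ x ∂μ, T x ∈ subdifferential u x := (withDensity_absolutelyContinuous _ _).ae_le
    (hTgrad.mono fun x hx => hu.mem_subdifferential_of_hasGradientAt hx)
  obtain ⟨B, hB, hBY, hBA, hTB⟩ := exists_measurableSet_ae_eq_biUnion_subdifferential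
    (continuousOn_univ.1 (hu.continuousOn isOpen_univ)) hYopen hYconv hvol hTmeas hsub
    hmap_ac hac_map hA
  have hGT : ∀ᵐ x ∂volume, 0 < G (T x) :=
    hvol.ae_le (ae_of_ae_map hTmeas.aemeasurable (hmap_ac.ae_le hGpos))
  rw [← measure_congr hBA, ← Measure.restrict_eq_self volume hBY,
    measure_eq_setLIntegral_inv_of_map_eq_withDensity hTmeas hGmeas.ennreal_ofReal
      (hGpos.mono fun y hy => (ENNReal.ofReal_pos.2 hy).ne')
      (ae_of_all _ fun _ => ENNReal.ofReal_ne_top) hpush hB hTB]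
  exact setLIntegral_inv_withDensity_ofReal hFmeas (hGmeas.comp hTmeas) hGT hA

/-- **Step 3 of the proof of Theorem 1 (equation (eq:Alex2)), case X = ℝⁿ.**
If `Y` is a nonempty open convex set, `F, 1/F` are essentially bounded on every compact
subset of `ℝⁿ`, `G, 1/G` on every compact subset of `Y`, total masses are one, and the
a.e.-defined gradient of the convex function `u` pushes `F dx` forward to `1_Y G dy`, then
`u` is an Alexandrov solution of the Monge–Ampère equation: for every Borel set `A`,
`|∂u(A)| = ∫_A F(x)/G(∇u(x)) dx`. -/
theorem brenier_mccann_is_alexandrov_solution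
    (n : ℕ) (hn : 1 ≤ n)
    (Y : Set (EuclideanSpace ℝ (Fin n)))
    (hYne : Y.Nonempty) (hYopen : IsOpen Y) (hYconv : Convex ℝ Y)
    (F G : EuclideanSpace ℝ (Fin n) → ℝ)
    (hFmeas : Measurable F) (hGmeas : Measurable G)
    (hFnn : ∀ x, 0 ≤ F x) (hGnn : ∀ y, 0 ≤ G y)
    (hFbd : ∀ K : Set (EuclideanSpace ℝ (Fin n)), IsCompact K →
      ∃ lam Lam : ℝ, 0 < lam ∧ lam ≤ Lam ∧
        ∀ᵐ x ∂(volume.restrict K), lam ≤ F x ∧ F x ≤ Lam)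
    (hGbd : ∀ K : Set (EuclideanSpace ℝ (Fin n)), K ⊆ Y → IsCompact K →
      ∃ lam Lam : ℝ, 0 < lam ∧ lam ≤ Lam ∧
        ∀ᵐ y ∂(volume.restrict K), lam ≤ G y ∧ G y ≤ Lam)
    (hF1 : ∫ x, F x = 1)
    (hG1 : ∫ y in Y, G y = 1)
    (u : EuclideanSpace ℝ (Fin n) → ℝ)
    (hu : ConvexOn ℝ Set.univ u)
    (T : EuclideanSpace ℝ (Fin n) → EuclideanSpace ℝ (Fin n))
    (hTmeas : Measurable T)
    (hTgrad : ∀ᵐ x ∂(volume : Measure (EuclideanSpace ℝ (Fin n))), HasGradientAt u (T x) x)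
    (hpush : Measure.map T (volume.withDensity (fun x => ENNReal.ofReal (F x)))
      = (volume.restrict Y).withDensity (fun y => ENNReal.ofReal (G y))) :
    ∀ A : Set (EuclideanSpace ℝ (Fin n)), MeasurableSet A →
      volume (⋃ x ∈ A, subdifferential u x)
        = ∫⁻ x in A, ENNReal.ofReal (F x / G (T x)) :=
  brenier_mccann_is_alexandrov_solution_general n Y hYopen hYconv F G hFmeas hGmeas hFbd hGbd u hu T
    hTmeas hTgrad hpush
end

section
/- Let n ≥ 1 and let Y ⊆ ℝⁿ be a nonempty open convex set. Let F : ℝⁿ → ℝ be a Borel function with F > 0 a.e. on ℝⁿ and ∫_{ℝⁿ} F dx = 1, and let G : ℝⁿ → ℝ be a nonnegative Borel function with G > 0 a.e. on Y and ∫_Y G dy = 1. Let u : ℝⁿ → ℝ be a convex function whose a.e.-defined gradient ∇u pushes F dx forward to 1_Y G dy. Then the subdifferential image satisfies ∂u(ℝⁿ) ⊆ closure(Y), and the Lebesgue measure of Y \ ∂u(ℝⁿ) is zero. -/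
/-!
Gradients of a convex function are subgradients. Since `F dx` and Lebesgue measure have the same
null sets, and so do `1_Y G dy` and Lebesgue measure on `Y`, almost every gradient lies in `Y`,
and the gradients are dense in `Y`.

`∂u(ℝⁿ) ⊆ closure Y`: if `p ∈ ∂u(x₀)` is strictly separated from `closure Y` by `⟪·, v⟫ < c`, then
`u x - u (x - v) ≤ c` wherever the gradient lies in `Y`, hence everywhere by density and
continuity; at `x = x₀ + v` this contradicts `u (x₀ + v) - u x₀ ≥ ⟪p, v⟫ > c`.

`Y ⊆ ∂u(ℝⁿ)`: the open set `Y` lies in the closure of `∂u(ℝⁿ)`, and so does a ball `ball y ρ` about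
each `y ∈ Y`. Compactness of the unit sphere then yields finitely many subgradients `q` such that
every unit vector `w` has `⟪q - y, w⟫ > ρ / 4` for one of them. Hence `u - ⟪y, ·⟫` grows linearly
at infinity, attains its minimum at some `x`, and `y ∈ ∂u(x)`.
-/

open MeasureTheory Set
open scoped InnerProductSpace ENNReal

open Filter Metric

section Subgradient

variable {E : Type*} [NormedAddCommGroup E] [InnerProductSpace ℝ E] {u : E → ℝ}

theorem ConvexOn.add_inner_sub_le_of_hasGradientAt [CompleteSpace E] (hu : ConvexOn ℝ univ u)
    {x g : E} (h : HasGradientAt u g x) (z : E) : u x + ⟪g, z - x⟫_ℝ ≤ u z := by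
  have hline : ConvexOn ℝ univ (u ∘ AffineMap.lineMap (k := ℝ) x z) := by
    simpa using hu.comp_affineMap (AffineMap.lineMap (k := ℝ) x z)
  have hderiv : HasDerivAt (u ∘ AffineMap.lineMap (k := ℝ) x z) ⟪g, z - x⟫_ℝ 0 := by
    have hx : AffineMap.lineMap (k := ℝ) x z 0 = x := AffineMap.lineMap_apply_zero x z
    have := (hx ▸ h.hasFDerivAt).comp_hasDerivAt (0 : ℝ) AffineMap.hasDerivAt_lineMap
    simpa only [InnerProductSpace.toDual_apply_apply] using this
  have := hline.le_slope_of_hasDerivAt (mem_univ 0) (mem_univ 1) zero_lt_one hderiv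
  simp only [slope, sub_zero, inv_one, Function.comp_apply, AffineMap.lineMap_apply_one,
    AffineMap.lineMap_apply_zero, vsub_eq_sub, smul_eq_mul, one_mul] at this
  linarith

theorem subgradient_mem_closure_of_dense [CompleteSpace E] {Y D : Set E} (hu : Continuous u)
    (hY : Convex ℝ Y) (hD : Dense D)
    (hDY : ∀ x ∈ D, ∃ g ∈ Y, ∀ z, u x + ⟪g, z - x⟫_ℝ ≤ u z)
    {x₀ p : E} (hp : ∀ z, u x₀ + ⟪p, z - x₀⟫_ℝ ≤ u z) : p ∈ closure Y := by
  by_contra hpY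
  obtain ⟨f, c, hfY, hfp⟩ := geometric_hahn_banach_closed_point hY.closure isClosed_closure hpY
  set v := (InnerProductSpace.toDual ℝ E).symm f
  have hv (w : E) : ⟪w, v⟫_ℝ = f w := by
    rw [real_inner_comm]; exact InnerProductSpace.toDual_symm_apply
  have hdrop (x : E) : u x ≤ u (x - v) + c := by
    refine hD.induction (P := fun x => u x ≤ u (x - v) + c) (fun x hx => ?_)
      (isClosed_le hu (by fun_prop)) x
    obtain ⟨g, hgY, hg⟩ := hDY x hx
    have := hg (x - v)
    rw [sub_sub_cancel_left, inner_neg_right, hv] at this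
    linarith [hfY g (subset_closure hgY)]
  have hrise := hp (x₀ + v)
  rw [add_sub_cancel_left, hv] at hrise
  have := hdrop (x₀ + v)
  rw [add_sub_cancel_right] at this
  linarith

theorem exists_finite_subset_forall_sphere_lt_inner [ProperSpace E] {Q : Set E} {y : E} {ρ : ℝ}
    (hρ : 0 < ρ) (hball : ball y ρ ⊆ closure Q) :
    ∃ s ⊆ Q, s.Finite ∧ ∀ w ∈ sphere (0 : E) 1, ∃ q ∈ s, ρ / 4 < ⟪q - y, w⟫_ℝ := by
  have hcover : sphere (0 : E) 1 ⊆ ⋃ q ∈ Q, {w | ρ / 4 < ⟪q - y, w⟫_ℝ} := by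
    intro w hw
    have hw1 : ‖w‖ = 1 := by simpa using hw
    have hmem : y + (ρ / 2) • w ∈ closure Q := hball <| by
      rw [mem_ball, dist_eq_norm, add_sub_cancel_left, norm_smul, hw1,
        Real.norm_of_nonneg (by positivity)]
      linarith
    obtain ⟨q, hqQ, hq⟩ := Metric.mem_closure_iff.1 hmem (ρ / 4) (by positivity)
    have herr : |⟪q - (y + (ρ / 2) • w), w⟫_ℝ| < ρ / 4 :=
      calc |⟪q - (y + (ρ / 2) • w), w⟫_ℝ| ≤ ‖q - (y + (ρ / 2) • w)‖ * ‖w‖ :=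
            abs_real_inner_le_norm _ _
        _ < ρ / 4 := by rwa [hw1, mul_one, ← dist_eq_norm, dist_comm]
    have hsplit : ⟪q - y, w⟫_ℝ = ρ / 2 + ⟪q - (y + (ρ / 2) • w), w⟫_ℝ := by
      rw [sub_add_eq_sub_sub, inner_sub_left _ ((ρ / 2) • w), real_inner_smul_left,
        real_inner_self_eq_norm_sq, hw1]
      ring
    refine mem_iUnion₂.2 ⟨q, hqQ, ?_⟩
    show ρ / 4 < ⟪q - y, w⟫_ℝ
    linarith [(abs_lt.1 herr).1]
  obtain ⟨s, hsQ, hs, hscover⟩ := (isCompact_sphere (0 : E) 1).elim_finite_subcover_image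
    (fun q _ => isOpen_lt continuous_const (by fun_prop)) hcover
  exact ⟨s, hsQ, hs, fun w hw => by simpa using hscover hw⟩

theorem tendsto_sub_inner_cocompact_of_ball_subset_closure [ProperSpace E] {y : E} {ρ : ℝ}
    (hρ : 0 < ρ) (hball : ball y ρ ⊆ closure (⋃ x, {q | ∀ z, u x + ⟪q, z - x⟫_ℝ ≤ u z})) :
    Tendsto (fun z => u z - ⟪y, z⟫_ℝ) (cocompact E) atTop := by
  obtain ⟨s, hsQ, hs, hcover⟩ := exists_finite_subset_forall_sphere_lt_inner hρ hball
  have : ∀ q ∈ s, ∃ x, ∀ z, u x + ⟪q, z - x⟫_ℝ ≤ u z := fun q hq => mem_iUnion.1 (hsQ hq)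
  choose! X hX using this
  obtain ⟨m, hm⟩ := (hs.image fun q => u (X q) - ⟪q, X q⟫_ℝ).bddBelow
  have hlower (z : E) (hz : z ≠ 0) : m + ρ / 4 * ‖z‖ ≤ u z - ⟪y, z⟫_ℝ := by
    have hz' : 0 < ‖z‖ := norm_pos_iff.2 hz
    obtain ⟨q, hqs, hq⟩ := hcover (‖z‖⁻¹ • z) <| by
      rw [mem_sphere_zero_iff_norm, norm_smul, norm_inv, norm_norm, inv_mul_cancel₀ hz'.ne']
    rw [real_inner_smul_right, lt_inv_mul_iff₀ hz'] at hq
    have hmq := hm (mem_image_of_mem _ hqs)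
    have hsub := hX q hqs z
    simp only [inner_sub_left, inner_sub_right] at hq hsub
    linarith
  refine tendsto_atTop_mono' _ ?_ <| tendsto_atTop_add_const_left _ m <|
    tendsto_norm_cocompact_atTop.const_mul_atTop (by positivity : 0 < ρ / 4)
  filter_upwards [(isCompact_singleton (x := (0 : E))).compl_mem_cocompact] with z hz
  exact hlower z hz

theorem interior_closure_subgradients_subset [ProperSpace E] (hu : Continuous u) :
    interior (closure (⋃ x, {q | ∀ z, u x + ⟪q, z - x⟫_ℝ ≤ u z})) ⊆
      ⋃ x, {q | ∀ z, u x + ⟪q, z - x⟫_ℝ ≤ u z} := by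
  intro y hy
  obtain ⟨ρ, hρ, hball⟩ := Metric.mem_nhds_iff.1 (mem_interior_iff_mem_nhds.1 hy)
  have hcont : Continuous fun z => u z - ⟪y, z⟫_ℝ := by fun_prop
  obtain ⟨x, hx⟩ := hcont.exists_forall_le
    (tendsto_sub_inner_cocompact_of_ball_subset_closure hρ hball)
  refine mem_iUnion.2 ⟨x, fun z => ?_⟩
  have := hx z
  rw [inner_sub_right]
  linarith

end Subgradient

theorem MeasureTheory.Measure.support_map_subset_closure_image {X Z : Type*} [MeasurableSpace X]
    [TopologicalSpace Z] [MeasurableSpace Z] [OpensMeasurableSpace Z] {μ : Measure X} {T : X → Z}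
    (hT : Measurable T) {A : Set X} (hA : ∀ᵐ x ∂μ, x ∈ A) :
    (μ.map T).support ⊆ closure (T '' A) :=
  Measure.support_subset_of_isClosed isClosed_closure <|
    (ae_map_iff hT.aemeasurable isClosed_closure.measurableSet).2 <|
      hA.mono fun _ hx => subset_closure (mem_image_of_mem T hx)

theorem subdifferential_image_subset_closure_and_full_measure_general
    (n : ℕ)
    (Y : Set (EuclideanSpace ℝ (Fin n)))
    (hYopen : IsOpen Y) (hYconv : Convex ℝ Y)
    (F G : EuclideanSpace ℝ (Fin n) → ℝ)
    (hFmeas : Measurable F) (hGmeas : Measurable G)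
    (hFpos : ∀ᵐ x ∂(volume : Measure (EuclideanSpace ℝ (Fin n))), 0 < F x)
    (hGpos : ∀ᵐ y ∂(volume.restrict Y), 0 < G y)
    (u : EuclideanSpace ℝ (Fin n) → ℝ)
    (hu : ConvexOn ℝ Set.univ u)
    (T : EuclideanSpace ℝ (Fin n) → EuclideanSpace ℝ (Fin n))
    (hTmeas : Measurable T)
    (hTgrad : ∀ᵐ x ∂(volume : Measure (EuclideanSpace ℝ (Fin n))), HasGradientAt u (T x) x)
    (hpush : Measure.map T (volume.withDensity (fun x => ENNReal.ofReal (F x)))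
      = (volume.restrict Y).withDensity (fun y => ENNReal.ofReal (G y))) :
    (⋃ x, subdifferential u x) ⊆ closure Y ∧
    volume (Y \ ⋃ x, subdifferential u x) = 0 := by
  set μ := volume.withDensity (fun x => ENNReal.ofReal (F x))
  set ν := (volume.restrict Y).withDensity (fun y => ENNReal.ofReal (G y))
  have hcont : Continuous u := continuousOn_univ.1 (hu.continuousOn isOpen_univ)
  have hvol_ac : volume ≪ μ :=
    withDensity_absolutelyContinuous' hFmeas.ennreal_ofReal.aemeasurable
      (hFpos.mono fun _ hx => by simpa using hx)
  have hY_ac : volume.restrict Y ≪ ν :=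
    withDensity_absolutelyContinuous' hGmeas.ennreal_ofReal.aemeasurable
      (hGpos.mono fun _ hy => by simpa using hy)
  have hTY : ∀ᵐ x ∂μ, T x ∈ Y := ae_of_ae_map hTmeas.aemeasurable <| by
    rw [hpush]
    exact (withDensity_absolutelyContinuous _ _).ae_le (ae_restrict_mem hYopen.measurableSet)
  set A := {x | T x ∈ Y ∧ HasGradientAt u (T x) x}
  have hA : ∀ᵐ x, x ∈ A := Filter.Eventually.and (hvol_ac.ae_le hTY) hTgrad
  have hAQ : T '' A ⊆ ⋃ x, subdifferential u x := by
    rintro _ ⟨x, hx, rfl⟩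
    exact mem_iUnion.2 ⟨x, hu.add_inner_sub_le_of_hasGradientAt hx.2⟩
  have hYA : Y ⊆ closure (T '' A) :=
    calc Y = interior Y ∩ (volume : Measure (EuclideanSpace ℝ (Fin n))).support := by
          rw [Measure.support_eq_univ, inter_univ, hYopen.interior_eq]
      _ ⊆ (volume.restrict Y).support := Measure.interior_inter_support
      _ ⊆ (μ.map T).support := hpush ▸ hY_ac.support_mono
      _ ⊆ closure (T '' A) := Measure.support_map_subset_closure_image hTmeas
          ((withDensity_absolutelyContinuous _ _).ae_le hA)
  have hYQ : Y ⊆ ⋃ x, subdifferential u x :=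
    (interior_maximal (hYA.trans (closure_mono hAQ)) hYopen).trans
      (interior_closure_subgradients_subset hcont)
  refine ⟨fun p hp => ?_, by rw [sdiff_eq_empty.2 hYQ, measure_empty]⟩
  obtain ⟨x₀, hx₀⟩ := mem_iUnion.1 hp
  exact subgradient_mem_closure_of_dense hcont hYconv (Measure.dense_of_ae hA)
    (fun x hx => ⟨T x, hx.1, hu.add_inner_sub_le_of_hasGradientAt hx.2⟩) hx₀

/-- **The key property (subgradimage) of Step 3 of the proof of Theorem 1, case X = ℝⁿ**
(Caffarelli's lemma extended to unbounded domains). If `Y` is a nonempty open convex set,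
`F > 0` a.e. on `ℝⁿ` with `∫ F = 1`, `G ≥ 0` with `G > 0` a.e. on `Y` and `∫_Y G = 1`, and
the a.e.-defined gradient of the convex function `u` pushes `F dx` forward to `1_Y G dy`,
then `∂u(ℝⁿ) ⊆ closure Y` and `|Y \ ∂u(ℝⁿ)| = 0`. -/
theorem subdifferential_image_subset_closure_and_full_measure
    (n : ℕ) (hn : 1 ≤ n)
    (Y : Set (EuclideanSpace ℝ (Fin n)))
    (hYne : Y.Nonempty) (hYopen : IsOpen Y) (hYconv : Convex ℝ Y)
    (F G : EuclideanSpace ℝ (Fin n) → ℝ)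
    (hFmeas : Measurable F) (hGmeas : Measurable G)
    (hFpos : ∀ᵐ x ∂(volume : Measure (EuclideanSpace ℝ (Fin n))), 0 < F x)
    (hGnn : ∀ y, 0 ≤ G y)
    (hGpos : ∀ᵐ y ∂(volume.restrict Y), 0 < G y)
    (hF1 : ∫ x, F x = 1)
    (hG1 : ∫ y in Y, G y = 1)
    (u : EuclideanSpace ℝ (Fin n) → ℝ)
    (hu : ConvexOn ℝ Set.univ u)
    (T : EuclideanSpace ℝ (Fin n) → EuclideanSpace ℝ (Fin n))
    (hTmeas : Measurable T)
    (hTgrad : ∀ᵐ x ∂(volume : Measure (EuclideanSpace ℝ (Fin n))), HasGradientAt u (T x) x)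
    (hpush : Measure.map T (volume.withDensity (fun x => ENNReal.ofReal (F x)))
      = (volume.restrict Y).withDensity (fun y => ENNReal.ofReal (G y))) :
    (⋃ x, subdifferential u x) ⊆ closure Y ∧
    volume (Y \ ⋃ x, subdifferential u x) = 0 :=
  subdifferential_image_subset_closure_and_full_measure_general n Y hYopen hYconv F G hFmeas hGmeas
    hFpos hGpos u hu T hTmeas hTgrad hpush
end

section
/- Let n ≥ 2, c > 0 and λ > 1, and set p := (n − 1 + λ)/(λ − 1). Then there exists a constant C > 0 such that for every θ ∈ (0, 1], the set X_θ := {(x₁, x') ∈ ℝ × ℝ^{n−1} : −θ|x'| ≤ x₁ ≤ −c|x'|^λ} has Lebesgue measure at most C θ^p. In particular, if λ < 2(n−1)/(n−2) (no condition when n = 2) then p > n − 1, so vol(X_θ) = o(θ^{n−1}) as θ → 0. -/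
/-!
A point of `X_θ` has `c |x'|^λ ≤ -x₁ ≤ θ |x'|`, so `|x'| ≤ R := (θ / c)^{1/(λ-1)}` and
`-θ R ≤ x₁ ≤ 0`. Hence `X_θ` lies in a cylinder of height `θ R` over a ball of radius `R` in
`ℝ^{n-1}`, whose volume is a constant times `θ R^n = c^{-n/(λ-1)} θ^p`.
-/

open MeasureTheory Set

/-- The region `X_θ` of the paper. -/
def cuspSet (E : Type*) [Norm E] (θ c lam : ℝ) : Set (ℝ × E) :=
  {x | -θ * ‖x.2‖ ≤ x.1 ∧ x.1 ≤ -c * ‖x.2‖ ^ lam}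

noncomputable def cuspRadius (θ c lam : ℝ) : ℝ :=
  (θ / c) ^ (lam - 1)⁻¹

lemma cuspRadius_pos {θ c lam : ℝ} (hθ : 0 < θ) (hc : 0 < c) : 0 < cuspRadius θ c lam :=
  Real.rpow_pos_of_pos (div_pos hθ hc) _

lemma le_cuspRadius {θ c lam r : ℝ} (hθ : 0 ≤ θ) (hc : 0 < c) (hlam : 1 < lam) (hr : 0 ≤ r)
    (h : c * r ^ lam ≤ θ * r) : r ≤ cuspRadius θ c lam := by
  rw [cuspRadius, Real.le_rpow_inv_iff_of_pos hr (div_nonneg hθ hc.le) (by linarith),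
    le_div_iff₀' hc]
  rcases hr.eq_or_lt with rfl | hr
  · rwa [Real.zero_rpow (by linarith), mul_zero]
  · have hsplit : r ^ lam = r ^ (lam - 1) * r := by
      rw [Real.rpow_sub hr, Real.rpow_one, div_mul_cancel₀ _ hr.ne']
    rw [hsplit, ← mul_assoc] at h
    exact le_of_mul_le_mul_right h hr

lemma cuspSet_subset_prod_closedBall {E : Type*} [SeminormedAddCommGroup E] {θ c lam : ℝ}
    (hθ : 0 ≤ θ) (hc : 0 < c) (hlam : 1 < lam) :
    cuspSet E θ c lam ⊆
      Icc (-(θ * cuspRadius θ c lam)) 0 ×ˢ Metric.closedBall 0 (cuspRadius θ c lam) := by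
  rintro ⟨x₁, x'⟩ ⟨hlow, hup⟩
  have hcusp : 0 ≤ c * ‖x'‖ ^ lam := mul_nonneg hc.le (Real.rpow_nonneg (norm_nonneg _) _)
  have hR : ‖x'‖ ≤ cuspRadius θ c lam :=
    le_cuspRadius hθ hc hlam (norm_nonneg _) (by linarith)
  refine ⟨⟨?_, by linarith⟩, by simpa using hR⟩
  nlinarith

lemma mul_cuspRadius_pow {θ c lam : ℝ} (hθ : 0 < θ) (hc : 0 < c) (hlam : 1 < lam) (k : ℕ) :
    θ * cuspRadius θ c lam ^ (k + 1) =
      c ^ (-((k : ℝ) + 1) / (lam - 1)) * θ ^ (((k : ℝ) + lam) / (lam - 1)) := by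
  have hlam' : lam - 1 ≠ 0 := by linarith
  have hexp : ((k : ℝ) + lam) / (lam - 1) = 1 + ((k : ℝ) + 1) / (lam - 1) := by
    field_simp
    ring
  rw [cuspRadius, ← Real.rpow_natCast, ← Real.rpow_mul (div_nonneg hθ.le hc.le),
    Real.div_rpow hθ.le hc.le, hexp, Real.rpow_add hθ, Real.rpow_one, neg_div,
    Real.rpow_neg hc.le]
  push_cast
  rw [inv_mul_eq_div]
  ring

lemma volume_prod_cuspSet_le {E : Type*} [NormedAddCommGroup E] [NormedSpace ℝ E]
    [FiniteDimensional ℝ E] [MeasurableSpace E] [BorelSpace E]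
    (μ : Measure E) [μ.IsAddHaarMeasure] {θ c lam : ℝ} (hθ : 0 < θ) (hc : 0 < c)
    (hlam : 1 < lam) :
    (volume.prod μ) (cuspSet E θ c lam) ≤
      ENNReal.ofReal (c ^ (-((Module.finrank ℝ E : ℝ) + 1) / (lam - 1)) *
        θ ^ (((Module.finrank ℝ E : ℝ) + lam) / (lam - 1))) * μ (Metric.closedBall 0 1) := by
  set R := cuspRadius θ c lam
  have hR : 0 < R := cuspRadius_pos hθ hc
  calc (volume.prod μ) (cuspSet E θ c lam)
      ≤ (volume.prod μ) (Icc (-(θ * R)) 0 ×ˢ Metric.closedBall 0 R) :=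
        measure_mono (cuspSet_subset_prod_closedBall hθ.le hc hlam)
    _ = ENNReal.ofReal (θ * R) * (ENNReal.ofReal (R ^ Module.finrank ℝ E) *
          μ (Metric.closedBall 0 1)) := by
        rw [Measure.prod_prod, Real.volume_Icc, Measure.addHaar_closedBall' _ _ hR.le, zero_sub,
          neg_neg]
    _ = _ := by
        rw [← mul_assoc, ← ENNReal.ofReal_mul (by positivity), mul_assoc, ← pow_succ',
          mul_cuspRadius_pow hθ hc hlam]

lemma sub_one_lt_cuspExponent {m lam : ℝ} (hm : 2 ≤ m) (hlam : 1 < lam)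
    (h : m = 2 ∨ lam < 2 * (m - 1) / (m - 2)) : m - 1 < (m - 1 + lam) / (lam - 1) := by
  suffices (m - 2) * lam < 2 * (m - 1) by
    rw [lt_div_iff₀ (by linarith)]
    linarith
  rcases hm.eq_or_lt with rfl | hm
  · norm_num
  · rcases h with rfl | h
    · norm_num
    · rwa [lt_div_iff₀ (by linarith), mul_comm] at h

/-- **The measure estimate of Remark 5 (rmk:bdry).** For `n ≥ 2`, `c > 0`, `λ > 1` and
`p = (n − 1 + λ)/(λ − 1)`, there is a constant `C > 0` such that for every `θ ∈ (0, 1]`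
the set `X_θ = {(x₁, x') : −θ|x'| ≤ x₁ ≤ −c|x'|^λ}` has Lebesgue measure at most `C θ^p`;
moreover if `λ < 2(n−1)/(n−2)` (no condition when `n = 2`) then `p > n − 1`. -/
theorem measure_estimate_boundary_cusp
    (n : ℕ) (hn : 2 ≤ n) (c lam : ℝ) (hc : 0 < c) (hlam : 1 < lam)
    (p : ℝ) (hp : p = ((n : ℝ) - 1 + lam) / (lam - 1)) :
    (∃ C : ℝ, 0 < C ∧ ∀ θ : ℝ, θ ∈ Set.Ioc (0 : ℝ) 1 →
      volume {x : ℝ × EuclideanSpace ℝ (Fin (n - 1)) |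
          -θ * ‖x.2‖ ≤ x.1 ∧ x.1 ≤ -c * ‖x.2‖ ^ lam}
        ≤ ENNReal.ofReal (C * θ ^ p)) ∧
    ((n = 2 ∨ lam < 2 * ((n : ℝ) - 1) / ((n : ℝ) - 2)) → (n : ℝ) - 1 < p) := by
  refine ⟨?_, fun h => hp ▸ sub_one_lt_cuspExponent (by exact_mod_cast hn) hlam
    (h.imp_left fun h2 => by exact_mod_cast h2)⟩
  set E := EuclideanSpace ℝ (Fin (n - 1))
  set ω := volume (Metric.closedBall (0 : E) 1)
  have hω : 0 < ω.toReal :=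
    ENNReal.toReal_pos (Metric.measure_closedBall_pos _ _ one_pos).ne' measure_closedBall_lt_top.ne
  have hdim : (Module.finrank ℝ E : ℝ) = n - 1 := by
    rw [finrank_euclideanSpace_fin, Nat.cast_sub (by omega), Nat.cast_one]
  refine ⟨c ^ (-(n : ℝ) / (lam - 1)) * ω.toReal, by positivity, fun θ hθ => ?_⟩
  have hbound := volume_prod_cuspSet_le (volume : Measure E) hθ.1 hc hlam
  rw [hdim, sub_add_cancel, ← hp, ← ENNReal.ofReal_toReal measure_closedBall_lt_top.ne,
    ← ENNReal.ofReal_mul (mul_nonneg (Real.rpow_nonneg hc.le _) (Real.rpow_nonneg hθ.1.le _))]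
    at hbound
  rw [Measure.volume_eq_prod, mul_right_comm]
  exact hbound
end

section
/- Let n ≥ 2 and let Y ⊆ ℝⁿ be a convex set with nonempty interior such that both the origin 0 and the first standard basis vector e₁ belong to the closure of Y. Then there exist c > 0 and θ₀ ∈ (0, 1) such that for every θ ∈ (0, θ₀), the set Y_θ := {y = (y₁, y') ∈ Y : y₁ > 0 and |y'| ≤ θ y₁} satisfies vol(Y_θ ∩ B₂) ≥ c θ^{n−1}, where B₂ is the open ball of radius 2 centered at the origin. -/
open MeasureTheory Set Metric
open scoped ENNReal Pointwise

/-!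
By convexity, an interior ball `B(p, r)` of `Y` and the segment `[0, e₁] ⊆ closure Y` give
`t • B(p, r) + (1 - t) • (s, 0) ⊆ interior Y` for `0 < t ≤ 1` and `s ∈ [0, 1]`. Sweeping `s` yields
a cylinder `[1/4, 3/4] × B(t p', t r)` inside `Y`. With `t` proportional to `θ` this cylinder lies
in the cone `|y'| ≤ θ y₁` and in `B₂`, and its volume `(t r)^{n-1} vol(B₁) / 2` is of order
`θ^{n-1}`.
-/

theorem Convex.ball_combo_subset_interior {F : Type*} [NormedAddCommGroup F] [NormedSpace ℝ F]
    {Y : Set F} (hY : Convex ℝ Y) {p z : F} {r t : ℝ} (hball : ball p r ⊆ interior Y)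
    (hz : z ∈ closure Y) (ht₀ : 0 < t) (ht₁ : t ≤ 1) :
    ball (t • p + (1 - t) • z) (t * r) ⊆ interior Y := by
  have hball_eq : ball (t • p + (1 - t) • z) (t * r) = t • ball p r + {(1 - t) • z} := by
    rw [_root_.smul_ball ht₀.ne', ball_add_singleton, Real.norm_of_nonneg ht₀.le]
  rw [hball_eq]
  calc t • ball p r + {(1 - t) • z} ⊆ t • interior Y + (1 - t) • closure Y :=
        add_subset_add (smul_set_mono hball) (singleton_subset_iff.2 (smul_mem_smul_set hz))
    _ ⊆ interior Y := hY.combo_interior_closure_subset_interior ht₀ (by linarith) (by ring)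

variable {E : Type*} [NormedAddCommGroup E]

theorem Icc_prod_ball_subset_cone_inter_ball {θ δ : ℝ} {c : E} (hθ : θ ≤ 1)
    (hcδ : ‖c‖ + δ ≤ θ / 4) :
    Icc (1 / 4 : ℝ) (3 / 4) ×ˢ ball c δ ⊆
      {y : ℝ × E | 0 < y.1 ∧ ‖y.2‖ ≤ θ * y.1} ∩ {y | y.1 ^ 2 + ‖y.2‖ ^ 2 < 4} := by
  rintro y ⟨⟨hy₁, hy₁'⟩, hy₂⟩
  have hy₂_le : ‖y.2‖ ≤ θ / 4 := by
    calc ‖y.2‖ ≤ ‖y.2 - c‖ + ‖c‖ := norm_le_norm_sub_add y.2 c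
      _ ≤ θ / 4 := by linarith [mem_ball_iff_norm.1 hy₂]
  have hθ₀ : 0 ≤ θ := by linarith [norm_nonneg y.2]
  refine ⟨⟨by linarith, hy₂_le.trans (by nlinarith)⟩, ?_⟩
  show y.1 ^ 2 + ‖y.2‖ ^ 2 < 4
  nlinarith [norm_nonneg y.2]

variable [NormedSpace ℝ E]

theorem Convex.Icc_prod_ball_subset_interior {Y : Set (ℝ × E)} (hY : Convex ℝ Y)
    (h0 : (0 : ℝ × E) ∈ closure Y) (he₁ : ((1 : ℝ), (0 : E)) ∈ closure Y)
    {p : ℝ × E} {r t a b : ℝ} (hball : ball p r ⊆ interior Y) (ht₀ : 0 < t) (ht₁ : t < 1)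
    (ha : t * p.1 ≤ a) (hb : b ≤ t * p.1 + (1 - t)) :
    Icc a b ×ˢ ball (t • p.2) (t * r) ⊆ interior Y := by
  rintro ⟨y₁, y'⟩ ⟨⟨hay, hyb⟩, hy'⟩
  have htr : 0 < t * r := pos_of_mem_ball hy'
  set s := (y₁ - t * p.1) / (1 - t)
  have hs : s ∈ Icc (0 : ℝ) 1 := by
    constructor
    · exact div_nonneg (by linarith) (by linarith)
    · rw [div_le_one (by linarith)]; linarith
  have hz : ((s, 0) : ℝ × E) ∈ closure Y := by
    simpa using hY.closure h0 he₁ (sub_nonneg.2 hs.2) hs.1 (sub_add_cancel 1 s)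
  apply hY.ball_combo_subset_interior hball hz ht₀ ht₁.le
  have hy₁ : y₁ = t * p.1 + (1 - t) * s := by
    have : 1 - t ≠ 0 := by linarith
    simp only [s]; field_simp; ring
  simpa [Prod.dist_eq, hy₁, htr] using hy'

variable [FiniteDimensional ℝ E] [MeasureSpace E] [BorelSpace E]
  [(volume : Measure E).IsAddHaarMeasure]

theorem volume_Icc_prod_ball (a b : ℝ) (x : E) {ρ : ℝ} (hρ : 0 < ρ) :
    volume (Icc a b ×ˢ ball x ρ) =
      ENNReal.ofReal (b - a) *
        (ENNReal.ofReal (ρ ^ Module.finrank ℝ E) * volume (ball (0 : E) 1)) := by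
  rw [Measure.volume_eq_prod, Measure.prod_prod, Real.volume_Icc,
    Measure.addHaar_ball_of_pos _ _ hρ]

theorem cone_volume_lower_bound_general
    (n : ℕ)
    (Y : Set (ℝ × EuclideanSpace ℝ (Fin (n - 1))))
    (hYconv : Convex ℝ Y) (hYint : (interior Y).Nonempty)
    (h0 : (0 : ℝ × EuclideanSpace ℝ (Fin (n - 1))) ∈ closure Y)
    (he1 : ((1 : ℝ), (0 : EuclideanSpace ℝ (Fin (n - 1)))) ∈ closure Y) :
    ∃ c : ℝ, 0 < c ∧ ∃ θ₀ : ℝ, θ₀ ∈ Set.Ioo (0 : ℝ) 1 ∧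
      ∀ θ : ℝ, θ ∈ Set.Ioo 0 θ₀ →
        ENNReal.ofReal (c * θ ^ (n - 1)) ≤
          volume ({y ∈ Y | 0 < y.1 ∧ ‖y.2‖ ≤ θ * y.1} ∩
            {y : ℝ × EuclideanSpace ℝ (Fin (n - 1)) | y.1 ^ 2 + ‖y.2‖ ^ 2 < 4}) := by
  obtain ⟨p, hp⟩ := hYint
  obtain ⟨r, hr, hball⟩ := Metric.isOpen_iff.1 isOpen_interior p hp
  set V := volume (ball (0 : EuclideanSpace ℝ (Fin (n - 1))) 1)
  have hV : 0 < V.toReal :=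
    ENNReal.toReal_pos (measure_ball_pos _ _ one_pos).ne' measure_ball_lt_top.ne
  set κ := 1 / (4 * (‖p‖ + r + 1))
  have hκ : κ * (‖p‖ + r + 1) = 1 / 4 := by simp only [κ]; field_simp
  refine ⟨(κ * r) ^ (n - 1) * V.toReal / 2, by positivity, 1 / 2, ⟨by norm_num, by norm_num⟩, ?_⟩
  rintro θ ⟨hθ₀, hθ₁⟩
  set t := κ * θ
  have ht : t * (‖p‖ + r + 1) = θ / 4 := by rw [mul_right_comm, hκ]; ring
  have ht₀ : 0 < t := by positivity
  have hp₁ := abs_le.1 (norm_fst_le p)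
  have hp₂ := norm_snd_le p
  have hcyl : Icc (1 / 4 : ℝ) (3 / 4) ×ˢ ball (t • p.2) (t * r) ⊆
      {y ∈ Y | 0 < y.1 ∧ ‖y.2‖ ≤ θ * y.1} ∩ {y | y.1 ^ 2 + ‖y.2‖ ^ 2 < 4} := by
    intro y hy
    have hcone := Icc_prod_ball_subset_cone_inter_ball (θ := θ) (by linarith)
      (by rw [norm_smul, Real.norm_of_nonneg ht₀.le]; nlinarith) hy
    refine ⟨⟨interior_subset (hYconv.Icc_prod_ball_subset_interior h0 he1 hball ht₀ ?_ ?_ ?_ hy),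
      hcone.1⟩, hcone.2⟩
    all_goals nlinarith
  calc ENNReal.ofReal ((κ * r) ^ (n - 1) * V.toReal / 2 * θ ^ (n - 1))
      = volume (Icc (1 / 4 : ℝ) (3 / 4) ×ˢ ball (t • p.2) (t * r)) := by
        rw [volume_Icc_prod_ball _ _ _ (by positivity), finrank_euclideanSpace_fin,
          ← ENNReal.ofReal_toReal measure_ball_lt_top.ne, ← ENNReal.ofReal_mul (by positivity),
          ← ENNReal.ofReal_mul (by norm_num)]
        congr 1
        ring
    _ ≤ _ := measure_mono hcyl

/-- **The cone-volume lower bound of Step 4, case (2-c), of the proof of Theorem 1.**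
Let `n ≥ 2` and let `Y ⊆ ℝⁿ = ℝ × ℝ^{n−1}` be a convex set with nonempty interior whose
closure contains both the origin and the first basis vector `e₁ = (1, 0)`. Then there are
`c > 0` and `θ₀ ∈ (0, 1)` such that for all `θ ∈ (0, θ₀)`, the cone-like set
`Y_θ = {y ∈ Y : y₁ > 0, |y'| ≤ θ y₁}` satisfies `vol(Y_θ ∩ B₂) ≥ c θ^{n−1}`,
where `B₂` is the Euclidean ball of radius `2` about the origin. -/
theorem cone_volume_lower_bound
    (n : ℕ) (hn : 2 ≤ n)
    (Y : Set (ℝ × EuclideanSpace ℝ (Fin (n - 1))))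
    (hYconv : Convex ℝ Y) (hYint : (interior Y).Nonempty)
    (h0 : (0 : ℝ × EuclideanSpace ℝ (Fin (n - 1))) ∈ closure Y)
    (he1 : ((1 : ℝ), (0 : EuclideanSpace ℝ (Fin (n - 1)))) ∈ closure Y) :
    ∃ c : ℝ, 0 < c ∧ ∃ θ₀ : ℝ, θ₀ ∈ Set.Ioo (0 : ℝ) 1 ∧
      ∀ θ : ℝ, θ ∈ Set.Ioo 0 θ₀ →
        ENNReal.ofReal (c * θ ^ (n - 1)) ≤
          volume ({y ∈ Y | 0 < y.1 ∧ ‖y.2‖ ≤ θ * y.1} ∩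
            {y : ℝ × EuclideanSpace ℝ (Fin (n - 1)) | y.1 ^ 2 + ‖y.2‖ ^ 2 < 4}) :=
  cone_volume_lower_bound_general n Y hYconv hYint h0 he1
end

section
/- Let n ≥ 1 and let Y ⊆ ℝⁿ be a nonempty open convex set. Let F : ℝⁿ → ℝ be a Borel function with F > 0 a.e. on ℝⁿ and ∫_{ℝⁿ} F dx = 1, and let G : ℝⁿ → ℝ be a nonnegative Borel function with G > 0 a.e. on Y and ∫_Y G dy = 1. Let u : ℝⁿ → ℝ be a convex function whose a.e.-defined gradient ∇u pushes the measure μ := F dx forward to 1_Y G dy. Then for every Borel set A ⊆ ℝⁿ, the symmetric difference of A and the set (∇u)^{-1}( ∂u(A) ∩ Y ) is μ-negligible, i.e. ∫ over this symmetric difference of F dx equals 0. -/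
/-! For `μ`-a.e. `x`, the slope `T x = ∇u(x)` is a subgradient of `u` at `x`, lies in `Y`, and,
the image measure being absolutely continuous, avoids the Lebesgue-null set of slopes that are
subgradients of `u` at two different points. The first two facts give `A ⊆ T⁻¹(∂u(A) ∩ Y)`
a.e., the third the reverse inclusion.

That set is null because of the truncated Legendre transforms
`u*_R(p) = sup_{‖x‖ ≤ R} (⟪p, x⟫ - u x)`: they are `R`-Lipschitz, hence differentiable a.e. by
Rademacher's theorem, and every `x` with `‖x‖ ≤ R` at which `p` is a subgradient of `u` is a
subgradient of `u*_R` at `p`, hence equal to `∇u*_R(p)` wherever that exists. -/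

open MeasureTheory Set
open scoped InnerProductSpace ENNReal symmDiff

open scoped NNReal

variable {E : Type*} [NormedAddCommGroup E] [InnerProductSpace ℝ E]

theorem ConvexOn.add_inner_le_of_hasGradientAt [CompleteSpace E] {f : E → ℝ}
    (hf : ConvexOn ℝ univ f) {x g : E} (hg : HasGradientAt f g x) (z : E) :
    f x + ⟪g, z - x⟫_ℝ ≤ f z := by
  have hline : ConvexOn ℝ univ (f ∘ AffineMap.lineMap (k := ℝ) x z) := by
    simpa using hf.comp_affineMap (AffineMap.lineMap x z)
  have hderiv : HasDerivAt (f ∘ AffineMap.lineMap (k := ℝ) x z) ⟪g, z - x⟫_ℝ 0 := by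
    simpa using hg.hasFDerivAt.comp_hasDerivAt_of_eq (0 : ℝ) AffineMap.hasDerivAt_lineMap (by simp)
  have := hline.le_slope_of_hasDerivAt (mem_univ 0) (mem_univ 1) zero_lt_one hderiv
  simp only [slope_def_field, Function.comp_apply, AffineMap.lineMap_apply_zero,
    AffineMap.lineMap_apply_one, sub_zero, div_one] at this
  linarith

theorem HasGradientAt.eq_of_forall_add_inner_le [CompleteSpace E] {f : E → ℝ} {x g p : E}
    (hg : HasGradientAt f g x) (hp : ∀ z, f x + ⟪p, z - x⟫_ℝ ≤ f z) : p = g := by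
  have hmin : IsLocalMin (fun z => f z - ⟪p, z⟫_ℝ) x :=
    Filter.Eventually.of_forall fun z => by
      show f x - ⟪p, x⟫_ℝ ≤ f z - ⟪p, z⟫_ℝ
      have := hp z
      rw [inner_sub_right] at this
      linarith
  have hzero := hmin.hasFDerivAt_eq_zero (hg.hasFDerivAt.sub (innerSL ℝ p).hasFDerivAt)
  refine ext_inner_right ℝ fun v => ?_
  have := congrArg (fun L : E →L[ℝ] ℝ => L v) hzero
  simp only [sub_apply, InnerProductSpace.toDual_apply_apply, innerSL_apply_apply,
    zero_apply, sub_eq_zero] at this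
  exact this.symm

/-- Unlike the full Legendre transform, the truncated one is finite and `R`-Lipschitz. -/
noncomputable def truncatedLegendre (u : E → ℝ) (R : ℝ) (p : E) : ℝ :=
  sSup ((fun x => ⟪p, x⟫_ℝ - u x) '' Metric.closedBall 0 R)

section truncatedLegendre

variable {u : E → ℝ} {R : ℝ} {p x : E}

theorem le_truncatedLegendre [ProperSpace E] (hu : Continuous u) (hx : ‖x‖ ≤ R) :
    ⟪p, x⟫_ℝ - u x ≤ truncatedLegendre u R p :=
  le_csSup ((isCompact_closedBall 0 R).bddAbove_image (by fun_prop))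
    ⟨x, mem_closedBall_zero_iff.2 hx, rfl⟩

theorem truncatedLegendre_le (hR : 0 ≤ R) {c : ℝ} (h : ∀ x, ‖x‖ ≤ R → ⟪p, x⟫_ℝ - u x ≤ c) :
    truncatedLegendre u R p ≤ c :=
  csSup_le ⟨_, 0, Metric.mem_closedBall_self hR, rfl⟩ <| by
    rintro _ ⟨x, hx, rfl⟩
    exact h x (mem_closedBall_zero_iff.1 hx)

theorem lipschitzWith_truncatedLegendre [ProperSpace E] (hu : Continuous u) (R : ℝ≥0) :
    LipschitzWith R (truncatedLegendre u R) := by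
  refine LipschitzWith.of_le_add_mul R fun p q => truncatedLegendre_le R.2 fun x hx => ?_
  have hq := le_truncatedLegendre (R := R) (p := q) hu hx
  have hpq : ⟪p, x⟫_ℝ - ⟪q, x⟫_ℝ ≤ R * dist p q := calc
    ⟪p, x⟫_ℝ - ⟪q, x⟫_ℝ = ⟪p - q, x⟫_ℝ := (inner_sub_left p q x).symm
    _ ≤ ‖p - q‖ * ‖x‖ := real_inner_le_norm _ _
    _ ≤ dist p q * R := by rw [dist_eq_norm]; exact mul_le_mul_of_nonneg_left hx (norm_nonneg _)
    _ = R * dist p q := mul_comm _ _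
  linarith

theorem truncatedLegendre_add_inner_le [ProperSpace E] (hu : Continuous u)
    (hx : ∀ z, u x + ⟪p, z - x⟫_ℝ ≤ u z) (hxR : ‖x‖ ≤ R) (q : E) :
    truncatedLegendre u R p + ⟪x, q - p⟫_ℝ ≤ truncatedLegendre u R q := by
  have hp : truncatedLegendre u R p ≤ ⟪p, x⟫_ℝ - u x :=
    truncatedLegendre_le ((norm_nonneg x).trans hxR) fun z _ => by
      have := hx z
      rw [inner_sub_right] at this
      linarith
  have hq := le_truncatedLegendre (p := q) hu hxR
  rw [inner_sub_right, real_inner_comm q x, real_inner_comm p x]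
  linarith

end truncatedLegendre

theorem ConvexOn.ae_subsingleton_setOf_forall_add_inner_le [FiniteDimensional ℝ E]
    [MeasurableSpace E] [BorelSpace E] (μ : Measure E) [μ.IsAddHaarMeasure] {u : E → ℝ}
    (hu : ConvexOn ℝ univ u) :
    ∀ᵐ p ∂μ, {x | ∀ z, u x + ⟪p, z - x⟫_ℝ ≤ u z}.Subsingleton := by
  have hc : Continuous u := continuousOn_univ.1 (hu.continuousOn isOpen_univ)
  have hdiff : ∀ᵐ p ∂μ, ∀ R : ℕ, DifferentiableAt ℝ (truncatedLegendre u R) p :=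
    ae_all_iff.2 fun R => (lipschitzWith_truncatedLegendre hc R).ae_differentiableAt
  filter_upwards [hdiff] with p hp x hx z hz
  obtain ⟨R, hR⟩ := exists_nat_ge (max ‖x‖ ‖z‖)
  have hgrad := (hp R).hasGradientAt
  rw [hgrad.eq_of_forall_add_inner_le (truncatedLegendre_add_inner_le hc hx
      ((le_max_left _ _).trans hR)),
    hgrad.eq_of_forall_add_inner_le (truncatedLegendre_add_inner_le hc hz
      ((le_max_right _ _).trans hR))]

theorem preimage_of_subdifferential_image_ae_eq_general
    (n : ℕ)
    (Y : Set (EuclideanSpace ℝ (Fin n)))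
    (hYopen : IsOpen Y)
    (F G : EuclideanSpace ℝ (Fin n) → ℝ)
    (u : EuclideanSpace ℝ (Fin n) → ℝ)
    (hu : ConvexOn ℝ Set.univ u)
    (T : EuclideanSpace ℝ (Fin n) → EuclideanSpace ℝ (Fin n))
    (hTmeas : Measurable T)
    (hTgrad : ∀ᵐ x ∂(volume : Measure (EuclideanSpace ℝ (Fin n))), HasGradientAt u (T x) x)
    (hpush : Measure.map T (volume.withDensity (fun x => ENNReal.ofReal (F x)))
      = (volume.restrict Y).withDensity (fun y => ENNReal.ofReal (G y))) :
    ∀ A : Set (EuclideanSpace ℝ (Fin n)), MeasurableSet A →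
      (volume.withDensity (fun x => ENNReal.ofReal (F x)))
        (A ∆ (T ⁻¹' ((⋃ x ∈ A, subdifferential u x) ∩ Y))) = 0 := by
  intro A _
  have hν : ∀ᵐ y ∂(volume.restrict Y).withDensity (fun y => ENNReal.ofReal (G y)),
      y ∈ Y ∧ {x | y ∈ subdifferential u x}.Subsingleton :=
    (withDensity_absolutelyContinuous _ _).ae_le <|
      (ae_restrict_mem hYopen.measurableSet).and <|
        Measure.restrict_le_self.absolutelyContinuous.ae_le <|
          hu.ae_subsingleton_setOf_forall_add_inner_le volume
  rw [← hpush] at hν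
  have hμ := (ae_of_ae_map hTmeas.aemeasurable hν).and
    ((withDensity_absolutelyContinuous _ _).ae_le hTgrad)
  rw [measure_symmDiff_eq_zero_iff, Filter.eventuallyEq_set]
  filter_upwards [hμ] with x ⟨⟨hTY, hunique⟩, hgrad⟩
  have hTx : T x ∈ subdifferential u x := hu.add_inner_le_of_hasGradientAt hgrad
  refine ⟨fun hxA => ⟨mem_biUnion hxA hTx, hTY⟩, fun ⟨hTA, _⟩ => ?_⟩
  obtain ⟨a, haA, hTa⟩ := mem_iUnion₂.1 hTA
  rwa [hunique hTx hTa]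

/-- **Claim (aeinverse) in Step 3 of the proof of Theorem 1, case X = ℝⁿ.** If `Y` is a
nonempty open convex set, `F > 0` a.e. with `∫ F = 1`, `G ≥ 0` with `G > 0` a.e. on `Y`
and `∫_Y G = 1`, and the a.e.-defined gradient `T = ∇u` of the convex function `u` pushes
`μ = F dx` forward to `1_Y G dy`, then for every Borel set `A` the symmetric difference
`A ∆ (∇u)⁻¹(∂u(A) ∩ Y)` is `μ`-negligible. -/
theorem preimage_of_subdifferential_image_ae_eq
    (n : ℕ) (hn : 1 ≤ n)
    (Y : Set (EuclideanSpace ℝ (Fin n)))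
    (hYne : Y.Nonempty) (hYopen : IsOpen Y) (hYconv : Convex ℝ Y)
    (F G : EuclideanSpace ℝ (Fin n) → ℝ)
    (hFmeas : Measurable F) (hGmeas : Measurable G)
    (hFpos : ∀ᵐ x ∂(volume : Measure (EuclideanSpace ℝ (Fin n))), 0 < F x)
    (hGnn : ∀ y, 0 ≤ G y)
    (hGpos : ∀ᵐ y ∂(volume.restrict Y), 0 < G y)
    (hF1 : ∫ x, F x = 1)
    (hG1 : ∫ y in Y, G y = 1)
    (u : EuclideanSpace ℝ (Fin n) → ℝ)
    (hu : ConvexOn ℝ Set.univ u)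
    (T : EuclideanSpace ℝ (Fin n) → EuclideanSpace ℝ (Fin n))
    (hTmeas : Measurable T)
    (hTgrad : ∀ᵐ x ∂(volume : Measure (EuclideanSpace ℝ (Fin n))), HasGradientAt u (T x) x)
    (hpush : Measure.map T (volume.withDensity (fun x => ENNReal.ofReal (F x)))
      = (volume.restrict Y).withDensity (fun y => ENNReal.ofReal (G y))) :
    ∀ A : Set (EuclideanSpace ℝ (Fin n)), MeasurableSet A →
      (volume.withDensity (fun x => ENNReal.ofReal (F x)))
        (A ∆ (T ⁻¹' ((⋃ x ∈ A, subdifferential u x) ∩ Y))) = 0 :=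
  preimage_of_subdifferential_image_ae_eq_general n Y hYopen F G u hu T hTmeas hTgrad hpush
end
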